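/- arXiv:1803.03839 — 6 statements merged into one kernel-verified Lean document; each statement's English description precedes it below -/
import Mathlib

section
/- Let S be a connected bipartite vertex set of G and let v ∉ S be a vertex adjacent to at least one vertex of S. Then S ∪ {v} is a connected bipartite vertex set if and only if all neighbors of v in S lie in the same side of the bipartition of G[S] induced by distance parity from the smallest vertex of S. -/
variable {V : Type*}

def IsBipartition (G : SimpleGraph V) (L R : Set V) : Prop :=
  (∀ v, v ∈ L ∨ v ∈ R) ∧ (∀ v, ¬(v ∈ L ∧ v ∈ R)) ∧
    ∀ u v, G.Adj u v → (u ∈ L ∧ v ∈ R) ∨ (u ∈ R ∧ v ∈ L)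

def IsBip (G : SimpleGraph V) : Prop := ∃ L R : Set V, IsBipartition G L R

/-- `S` is a connected bipartite vertex set of `G`. -/
def CBVS (G : SimpleGraph V) (S : Set V) : Prop :=
  (G.induce S).Connected ∧ IsBip (G.induce S)

/-!
A 2-colouring of a connected graph determines the parity of every distance: `dist a b` is even
exactly when `a` and `b` have the same colour. Hence the neighbours of `v` in `S` all lie at
distances of one parity from `r` exactly when they all carry one colour of a 2-colouring of
`G[S]`, which is exactly when the colouring extends to `G[S ∪ {v}]` by giving `v` the other
colour. Every 2-colouring of `G[S ∪ {v}]` arises this way from its restriction to `S`, and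
`G[S ∪ {v}]` is connected through an edge between `v` and `S`.
-/

namespace SimpleGraph

variable {H : SimpleGraph V}

theorem isBip_iff_nonempty_coloring_bool : IsBip H ↔ Nonempty (H.Coloring Bool) := by
  classical
  constructor
  · rintro ⟨L, R, -, hdisj, hadj⟩
    refine ⟨Coloring.mk (fun u => decide (u ∈ L)) fun {u w} huw => ?_⟩
    rcases hadj u w huw with ⟨hu, hw⟩ | ⟨hu, hw⟩
    · simpa [hu] using fun h => hdisj w ⟨h, hw⟩
    · simpa [hw] using fun h => hdisj u ⟨h, hu⟩
  · rintro ⟨c⟩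
    refine ⟨{u | c u = true}, {u | c u = false}, fun u => ?_, fun u => ?_, fun u w huw => ?_⟩
    · exact (c u).eq_false_or_eq_true
    · simp
    · have := c.valid huw
      cases hu : c u <;> cases hw : c w <;> simp_all

theorem Coloring.eq_not_of_adj (c : H.Coloring Bool) {u w : V} (h : H.Adj u w) : c w = !c u :=
  Bool.eq_not_iff.2 (c.valid h).symm

theorem Connected.even_dist_iff (hconn : H.Connected) (c : H.Coloring Bool) (a b : V) :
    Even (H.dist a b) ↔ c a = c b := by
  obtain ⟨p, hp⟩ := hconn.exists_walk_length_eq_dist a b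
  rw [← hp, c.even_length_iff_congr p]
  exact Bool.eq_iff_iff.symm

theorem Connected.even_or_odd_dist_iff_exists_color (hconn : H.Connected) (c : H.Coloring Bool)
    (r : V) (N : V → Prop) :
    ((∀ u, N u → Even (H.dist r u)) ∨ (∀ u, N u → Odd (H.dist r u))) ↔
      ∃ b, ∀ u, N u → c u = b := by
  simp only [← Nat.not_even_iff_odd, hconn.even_dist_iff c]
  constructor
  · rintro (h | h)
    · exact ⟨c r, fun u hu => (h u hu).symm⟩
    · exact ⟨!c r, fun u hu => by cases hr : c r <;> cases hu' : c u <;> simp_all⟩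
  · rintro ⟨b, hb⟩
    cases hr : c r <;> cases b <;> simp_all

theorem nonempty_coloring_induce_insert {α : Type*} {G : SimpleGraph V} {S : Set V}
    (c : (G.induce S).Coloring α) (v : V) (a : α) (ha : ∀ u : S, G.Adj v u → c u ≠ a) :
    Nonempty ((G.induce (insert v S)).Coloring α) := by
  classical
  refine ⟨Coloring.mk (fun u => if hu : (u : V) ∈ S then c ⟨u, hu⟩ else a) fun {u w} huw => ?_⟩
  have huw' : G.Adj u w := huw
  by_cases hu : (u : V) ∈ S <;> by_cases hw : (w : V) ∈ S <;> simp only [hu, hw, dite_true, dite_false]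
  · exact c.valid huw
  · have hwv : (w : V) = v := w.2.resolve_right hw
    exact ha ⟨u, hu⟩ (by simpa [hwv] using huw'.symm)
  · have huv : (u : V) = v := u.2.resolve_right hu
    exact (ha ⟨w, hw⟩ (by simpa [huv] using huw')).symm
  · exact absurd ((u.2.resolve_right hu).trans (w.2.resolve_right hw).symm) huw'.ne

end SimpleGraph

open SimpleGraph

theorem stmt_2_general (G : SimpleGraph V)
    (S : Set V) (hS : CBVS G S)
    (r : V) (hr : r ∈ S)
    (v : V) (hadj : ∃ s ∈ S, G.Adj v s) :
    CBVS G (S ∪ {v}) ↔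
      ((∀ s, ∀ hs : s ∈ S, G.Adj v s → Even ((G.induce S).dist ⟨r, hr⟩ ⟨s, hs⟩)) ∨
       (∀ s, ∀ hs : s ∈ S, G.Adj v s → Odd ((G.induce S).dist ⟨r, hr⟩ ⟨s, hs⟩))) := by
  obtain ⟨hconn, hbip⟩ := hS
  obtain ⟨c⟩ := isBip_iff_nonempty_coloring_bool.1 hbip
  obtain ⟨s₀, hs₀, hvs₀⟩ := hadj
  have hconn' : (G.induce (S ∪ {v})).Connected :=
    connected_induce_union hconn.preconnected .of_subsingleton hs₀ rfl hvs₀.symm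
  have parity_iff (c : (G.induce S).Coloring Bool) :
      ((∀ s, ∀ hs : s ∈ S, G.Adj v s → Even ((G.induce S).dist ⟨r, hr⟩ ⟨s, hs⟩)) ∨
       (∀ s, ∀ hs : s ∈ S, G.Adj v s → Odd ((G.induce S).dist ⟨r, hr⟩ ⟨s, hs⟩))) ↔
        ∃ b, ∀ u : S, G.Adj v u → c u = b := by
    simpa only [Subtype.forall] using
      hconn.even_or_odd_dist_iff_exists_color c ⟨r, hr⟩ (G.Adj v ·)
  rw [CBVS, isBip_iff_nonempty_coloring_bool, and_iff_right hconn']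
  constructor
  · rintro ⟨c'⟩
    refine (parity_iff (c'.comp (induceHomOfLE G Set.subset_union_left).toHom)).2
      ⟨!c' ⟨v, Or.inr rfl⟩, fun u hu => c'.eq_not_of_adj (w := ⟨u, Or.inl u.2⟩) hu⟩
  · intro h
    obtain ⟨b, hb⟩ := (parity_iff c).1 h
    rw [Set.union_singleton]
    exact nonempty_coloring_induce_insert c v (!b) fun u hu => by simp [hb u hu]

/-- Let `S` be a connected bipartite vertex set of a connected graph `G`, `r` the smallest
vertex of `S`, and `v ∉ S` a vertex adjacent to at least one vertex of `S`.  Then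
`S ∪ {v}` is a connected bipartite vertex set iff all neighbors of `v` in `S` lie in the
same side of the bipartition of `G[S]` given by parity of distance from `r` in `G[S]`. -/
theorem stmt_2 [Fintype V] [LinearOrder V] (G : SimpleGraph V) (hG : G.Connected)
    (S : Set V) (hS : CBVS G S)
    (r : V) (hr : r ∈ S) (hmin : ∀ s ∈ S, r ≤ s)
    (v : V) (hv : v ∉ S) (hadj : ∃ s ∈ S, G.Adj v s) :
    CBVS G (S ∪ {v}) ↔
      ((∀ s, ∀ hs : s ∈ S, G.Adj v s → Even ((G.induce S).dist ⟨r, hr⟩ ⟨s, hs⟩)) ∨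
       (∀ s, ∀ hs : s ∈ S, G.Adj v s → Odd ((G.induce S).dist ⟨r, hr⟩ ⟨s, hs⟩))) :=
  stmt_2_general G S hS r hr v hadj
end

section
/- For a connected bipartite vertex set S of G and two distinct child generators u < v of S (in the vertex ordering), the family of connected bipartite supersets of S ∪ {u} contained in G(S, ≥u) is disjoint from the family of connected bipartite supersets of S ∪ {v} contained in G(S, ≥v). -/
variable {V : Type*}

/-- The set `C(S, G)` of child generators of `S`:
vertices `w ∉ S` such that `S ∪ {w}` is a connected bipartite vertex set. -/
def CSet (G : SimpleGraph V) (S : Set V) : Set V :=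
  {w | w ∉ S ∧ CBVS G (S ∪ {w})}

/-- The vertex set of `G(S, ≥ u)`: `G` with all child generators of `S` smaller than `u`
deleted. -/
def Gge [LinearOrder V] (G : SimpleGraph V) (S : Set V) (u : V) : Set V :=
  {x | ¬ (x ∈ CSet G S ∧ x < u)}

/-- `𝒮(G[A], T)`: connected bipartite vertex sets of the induced subgraph `G[A]`
containing `T`, viewed as subsets of `V`. -/
def Sol (G : SimpleGraph V) (A T : Set V) : Set (Set V) :=
  {S' | S' ⊆ A ∧ T ⊆ S' ∧ CBVS G S'}

theorem notMem_Gge_of_lt [LinearOrder V] {G : SimpleGraph V} {S : Set V} {u v : V}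
    (hu : u ∈ CSet G S) (huv : u < v) : u ∉ Gge G S v :=
  fun h => h ⟨hu, huv⟩

theorem stmt_5_general [LinearOrder V] (G : SimpleGraph V) (S : Set V)
    (u v : V) (hu : u ∈ CSet G S) (huv : u < v) :
    Sol G (Gge G S u) (S ∪ {u}) ∩ Sol G (Gge G S v) (S ∪ {v}) = ∅ := by
  refine Set.eq_empty_of_forall_notMem fun S' ⟨⟨_, huS', _⟩, hS'v, _⟩ => ?_
  exact notMem_Gge_of_lt hu huv (hS'v (huS' (Set.mem_union_right S rfl)))

/-- For distinct child generators `u < v` of a connected bipartite vertex set `S`, the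
family of connected bipartite supersets of `S ∪ {u}` inside `G(S, ≥u)` is disjoint from
the family of connected bipartite supersets of `S ∪ {v}` inside `G(S, ≥v)`. -/
theorem stmt_5 [Fintype V] [LinearOrder V] (G : SimpleGraph V) (S : Set V)
    (hS : CBVS G S) (u v : V) (hu : u ∈ CSet G S) (hv : v ∈ CSet G S) (huv : u < v) :
    Sol G (Gge G S u) (S ∪ {u}) ∩ Sol G (Gge G S v) (S ∪ {v}) = ∅ :=
  stmt_5_general G S u v hu huv
end

section
/- For a connected bipartite vertex set S of G, the family of all connected bipartite vertex sets of G containing S equals {S} together with the disjoint union over all child generators u of S of the families of connected bipartite vertex sets of G(S, ≥u) containing S ∪ {u}. -/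
/-! Every connected bipartite `S' ⊋ S` contains a child generator of `S`: a walk inside `S'`
from `S` to `S' \ S` leaves `S` along an edge `s w`, and `S ∪ {w}` is connected through that
edge and bipartite as a subset of `S'`. Taking the least such `u`, `S'` avoids every smaller
child generator, i.e. lies in `G(S, ≥u)`; conversely `G(S, ≥v)` omits `u` whenever `u < v`,
which makes the families disjoint. -/

variable {V : Type*}

theorem IsBip.comap {W : Type*} {G : SimpleGraph V} {H : SimpleGraph W} (f : H →g G)
    (hG : IsBip G) : IsBip H := by
  obtain ⟨L, R, hcover, hdisj, hadj⟩ := hG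
  exact ⟨f ⁻¹' L, f ⁻¹' R, fun v => hcover (f v), fun v => hdisj (f v),
    fun _ _ h => hadj _ _ (f.map_adj h)⟩

theorem connected_induce_union_singleton {G : SimpleGraph V} {S : Set V}
    (hS : (G.induce S).Connected) {s w : V} (hs : s ∈ S) (hsw : G.Adj s w) :
    (G.induce (S ∪ {w})).Connected :=
  SimpleGraph.connected_induce_union hS.preconnected SimpleGraph.Preconnected.of_subsingleton
    hs rfl hsw

theorem exists_adj_of_ssubset_of_preconnected_induce {G : SimpleGraph V} {S S' : Set V}
    (hS' : (G.induce S').Preconnected) (h : S ⊂ S') (hS : S.Nonempty) :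
    ∃ s ∈ S, ∃ w ∈ S' \ S, G.Adj s w := by
  obtain ⟨s, hs⟩ := hS
  obtain ⟨w, hwS', hwS⟩ := Set.exists_of_ssubset h
  obtain ⟨p⟩ := hS' ⟨s, h.1 hs⟩ ⟨w, hwS'⟩
  obtain ⟨d, -, hd₁, hd₂⟩ := p.exists_boundary_dart (Subtype.val ⁻¹' S) hs hwS
  exact ⟨d.fst, hd₁, d.snd, ⟨d.snd.2, hd₂⟩, d.adj⟩

theorem CBVS.exists_mem_CSet_of_ssubset {G : SimpleGraph V} {S S' : Set V} (hS : CBVS G S)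
    (hS' : CBVS G S') (h : S ⊂ S') : ∃ u ∈ CSet G S, u ∈ S' := by
  obtain ⟨s, hs, w, ⟨hwS', hwS⟩, hsw⟩ :=
    exists_adj_of_ssubset_of_preconnected_induce hS'.1.preconnected h (Set.nonempty_coe_sort.1 hS.1.nonempty)
  have hsub : S ∪ {w} ⊆ S' := Set.union_subset h.1 (Set.singleton_subset_iff.2 hwS')
  exact ⟨w, ⟨hwS, connected_induce_union_singleton hS.1 hs hsw,
    hS'.2.comap (G.induceHomOfLE hsub).toHom⟩, hwS'⟩

theorem Sol_mono {G : SimpleGraph V} {A A' T T' : Set V} (hA : A ⊆ A') (hT : T' ⊆ T) :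
    Sol G A T ⊆ Sol G A' T' :=
  fun _ ⟨hA', hT', hS'⟩ => ⟨hA'.trans hA, hT.trans hT', hS'⟩

theorem self_notMem_Sol_union_singleton {G : SimpleGraph V} {A S : Set V} {u : V}
    (hu : u ∉ S) : S ∉ Sol G A (S ∪ {u}) :=
  fun ⟨_, h, _⟩ => hu (h (Or.inr rfl))

section LinearOrder

variable [LinearOrder V] {G : SimpleGraph V} {S : Set V}

theorem exists_mem_Sol_Gge [WellFoundedLT V] (hS : CBVS G S) {S' : Set V}
    (hS' : S' ∈ Sol G Set.univ S) (hne : S' ≠ S) :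
    ∃ u ∈ CSet G S, S' ∈ Sol G (Gge G S u) (S ∪ {u}) := by
  obtain ⟨-, hSS', hS'⟩ := hS'
  obtain ⟨u, ⟨huC, huS'⟩, hmin⟩ := wellFounded_lt.has_min {u | u ∈ CSet G S ∧ u ∈ S'}
    (hS.exists_mem_CSet_of_ssubset hS' (hSS'.ssubset_of_ne hne.symm))
  exact ⟨u, huC, fun x hx ⟨hxC, hxu⟩ => hmin x ⟨hxC, hx⟩ hxu,
    Set.union_subset hSS' (Set.singleton_subset_iff.2 huS'), hS'⟩

theorem Sol_univ_eq_union_iUnion_Sol_Gge [WellFoundedLT V] (hS : CBVS G S) :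
    Sol G Set.univ S = {S} ∪ ⋃ u ∈ CSet G S, Sol G (Gge G S u) (S ∪ {u}) := by
  refine Set.Subset.antisymm (fun S' hS' => ?_) (Set.union_subset ?_ ?_)
  · by_cases hne : S' = S
    · exact Or.inl hne
    · obtain ⟨u, hu, hS'u⟩ := exists_mem_Sol_Gge hS hS' hne
      exact Or.inr (Set.mem_biUnion hu hS'u)
  · exact Set.singleton_subset_iff.2 ⟨Set.subset_univ S, subset_rfl, hS⟩
  · exact Set.iUnion₂_subset fun u _ => Sol_mono (Set.subset_univ _) Set.subset_union_left

theorem disjoint_Sol_Gge_of_lt {u v : V} (hu : u ∈ CSet G S) (huv : u < v) :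
    Disjoint (Sol G (Gge G S u) (S ∪ {u})) (Sol G (Gge G S v) (S ∪ {v})) :=
  Set.disjoint_left.2 fun _ ⟨_, hu', _⟩ ⟨hv, _, _⟩ => hv (hu' (Or.inr rfl)) ⟨hu, huv⟩

end LinearOrder

/-- The family of all connected bipartite vertex sets of `G` containing a connected
bipartite vertex set `S` is `{S}` together with the disjoint union, over all child
generators `u` of `S`, of the families of connected bipartite vertex sets of `G(S, ≥u)`
containing `S ∪ {u}`. -/
theorem stmt_6 [Fintype V] [LinearOrder V] (G : SimpleGraph V) (S : Set V)
    (hS : CBVS G S) :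
    (Sol G Set.univ S = {S} ∪ ⋃ u ∈ CSet G S, Sol G (Gge G S u) (S ∪ {u})) ∧
      (∀ u ∈ CSet G S, S ∉ Sol G (Gge G S u) (S ∪ {u})) ∧
      (∀ u ∈ CSet G S, ∀ v ∈ CSet G S, u ≠ v →
        Sol G (Gge G S u) (S ∪ {u}) ∩ Sol G (Gge G S v) (S ∪ {v}) = ∅) := by
  refine ⟨Sol_univ_eq_union_iUnion_Sol_Gge hS, fun u hu => self_notMem_Sol_union_singleton hu.1,
    fun u hu v hv huv => ?_⟩
  rw [← Set.disjoint_iff_inter_eq_empty]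
  rcases huv.lt_or_gt with h | h
  · exact disjoint_Sol_Gge_of_lt hu h
  · exact (disjoint_Sol_Gge_of_lt hv h).symm
end

section
/- In the binary-partition enumeration of connected bipartite vertex sets with a degeneracy ordering, each vertex v in the current candidate set C(S, G) has at most one larger neighbor belonging to S, where S is any connected bipartite vertex set reachable by the algorithm (i.e., built by repeatedly adding the child generator and restricting to G(S', ≥u) at each step). -/
variable {V : Type*}

/-- Child generators of `S` in the induced subgraph `G[A]`: vertices `w ∈ A`, `w ∉ S`,
such that `S ∪ {w}` is a connected bipartite vertex set. -/
def CSetIn (G : SimpleGraph V) (A S : Set V) : Set V :=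
  {w | w ∈ A ∧ w ∉ S ∧ CBVS G (S ∪ {w})}

/-- The states `(S, A)` reachable by the binary-partition enumeration algorithm:
starting from a singleton `{v}` in the whole graph, repeatedly add a chosen child
generator `u` to the current set and delete from the current graph all child generators
smaller than `u`. -/
inductive Reach [LinearOrder V] (G : SimpleGraph V) : Set V → Set V → Prop
  | base (v : V) : Reach G {v} Set.univ
  | step (S A : Set V) (u : V) (h : Reach G S A) (hu : u ∈ CSetIn G A S) :
      Reach G (S ∪ {u}) (A \ {w | w ∈ CSetIn G A S ∧ w < u})

/-!
Induct along the run of the algorithm. Suppose `v` is a candidate of the new state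
`(S ∪ {u}, A')` and has a larger neighbour `t ∈ S`. Then `v` was already a candidate of
`(S, A)`: `S ∪ {v}` is connected through `t`, and bipartite as a subset of `S ∪ {u, v}`.
So if `u` were a larger neighbour as well, `v < u` would have removed `v` from `A'`; hence the
larger neighbours of `v` in `S ∪ {u}` lie in `S`, and the induction hypothesis applies. If `v`
has no larger neighbour in `S`, then `u` is the only possible one.
-/

lemma IsBip.of_hom {W : Type*} {G : SimpleGraph V} {H : SimpleGraph W} (f : G →g H)
    (h : IsBip H) : IsBip G := by
  obtain ⟨L, R, hcover, hdisj, hadj⟩ := h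
  exact ⟨f ⁻¹' L, f ⁻¹' R, fun v => hcover (f v), fun v => hdisj (f v),
    fun u v huv => hadj _ _ (f.map_adj huv)⟩

lemma Reach.connected_induce [LinearOrder V] {G : SimpleGraph V} {S A : Set V}
    (h : Reach G S A) : (G.induce S).Connected := by
  cases h with
  | base v => exact .of_subsingleton
  | step S A u _ hu => exact hu.2.2.1

lemma mem_cSetIn_of_mem_cSetIn_union {G : SimpleGraph V} {S A A' : Set V} {u v t : V}
    (hS : (G.induce S).Connected) (hA : A' ⊆ A) (hv : v ∈ CSetIn G A' (S ∪ {u}))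
    (ht : t ∈ S) (htv : G.Adj t v) : v ∈ CSetIn G A S := by
  obtain ⟨hvA, hvS, -, hbip⟩ := hv
  have hsub : S ∪ {v} ⊆ S ∪ {u} ∪ {v} := Set.union_subset_union_left _ Set.subset_union_left
  exact ⟨hA hvA, fun h => hvS (Or.inl h),
    G.connected_induce_union hS.preconnected .of_subsingleton ht rfl htv,
    hbip.of_hom (G.induceHomOfLE hsub).toHom⟩

lemma Reach.subsingleton_upper_neighbors [LinearOrder V] {G : SimpleGraph V} {S A : Set V}
    (h : Reach G S A) {v : V} (hv : v ∈ CSetIn G A S) :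
    {s ∈ S | G.Adj v s ∧ v < s}.Subsingleton := by
  induction h generalizing v with
  | base w => exact Set.subsingleton_singleton.anti (Set.sep_subset _ _)
  | step S A u hreach hu ih =>
    by_cases hlarger : ∃ t ∈ S, G.Adj v t ∧ v < t
    · obtain ⟨t, htS, hvt, -⟩ := hlarger
      have hvold : v ∈ CSetIn G A S :=
        mem_cSetIn_of_mem_cSetIn_union hreach.connected_induce Set.sdiff_subset hv htS hvt.symm
      have hvu : ¬v < u := fun hvu => hv.1.2 ⟨hvold, hvu⟩
      refine (ih hvold).anti ?_
      rintro s ⟨hs | rfl, hvs⟩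
      · exact ⟨hs, hvs⟩
      · exact absurd hvs.2 hvu
    · refine (Set.subsingleton_singleton (a := u)).anti ?_
      rintro s ⟨hs | hs, hvs⟩
      · exact absurd ⟨s, hs, hvs⟩ hlarger
      · exact hs

theorem stmt_14_general [LinearOrder V] (G : SimpleGraph V) (S A : Set V)
    (h : Reach G S A) (v : V) (hv : v ∈ CSetIn G A S) :
    {s ∈ S | G.Adj v s ∧ v < s}.ncard ≤ 1 := by
  have hsub := h.subsingleton_upper_neighbors hv
  exact (Set.ncard_le_one hsub.finite).2 fun _ ha _ hb => hsub ha hb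

/-- In the binary-partition enumeration, for any reachable state `(S, A)` and any vertex
`v` in the current candidate set (child generators of `S` in `G[A]`), `v` has at most one
neighbor in `S` that is larger than `v`. -/
theorem stmt_14 [Fintype V] [LinearOrder V] (G : SimpleGraph V) (S A : Set V)
    (h : Reach G S A) (v : V) (hv : v ∈ CSetIn G A S) :
    {s ∈ S | G.Adj v s ∧ v < s}.ncard ≤ 1 :=
  stmt_14_general G S A h v hv
end

section
/- Let F be a connected bipartite edge set of G with a 2-labeling of V[F] such that every edge of F joins differently-labeled vertices, and suppose no edge of G \ F closes an odd cycle with F (B(G, F) = ∅). Let e be an edge adjacent to F with one new endpoint w ∉ V[F]. Then the set B(G', F ∪ {e}) of edges whose addition to F ∪ {e} creates an odd cycle equals exactly the set of edges incident to w whose other endpoint carries the same label as w receives (the label opposite to its neighbor in F ∪ {e}), i.e., B(G', F ∪ {e}) = N₋(G, F, e). -/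
variable {V : Type*}

/-- `F` is a connected bipartite edge set: the subgraph `(V[F], F)` is connected and
bipartite. -/
def CBES (F : Set (Sym2 V)) : Prop :=
  ((SimpleGraph.fromEdgeSet F).induce (SimpleGraph.fromEdgeSet F).support).Connected ∧
    IsBip ((SimpleGraph.fromEdgeSet F).induce (SimpleGraph.fromEdgeSet F).support)

/-- `V[F]`: the endpoints of the edges of `F`. -/
def VF (F : Set (Sym2 V)) : Set V := {v | ∃ e ∈ F, v ∈ e}

/-- `F ∪ {f}` contains an odd cycle through `f`. -/
def OddClose (F : Set (Sym2 V)) (f : Sym2 V) : Prop :=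
  ∃ (v : V) (w : (SimpleGraph.fromEdgeSet (F ∪ {f})).Walk v v),
    w.IsCycle ∧ Odd w.length ∧ f ∈ w.edges

/-- `B(G, F)`: edges of `G` outside `F` whose addition to `F` creates an odd cycle. -/
def Bset (G : SimpleGraph V) (F : Set (Sym2 V)) : Set (Sym2 V) :=
  {f | f ∈ G.edgeSet ∧ f ∉ F ∧ OddClose F f}

open SimpleGraph

private lemma walk_parity {H : SimpleGraph V} (ℓ' : V → Bool) {a b : V} (p : H.Walk a b) :
    (ℓ' a = ℓ' b) ↔
      Even (p.length +
        (p.darts.filter (fun d => ℓ' d.toProd.1 == ℓ' d.toProd.2)).length) := by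
  induction p with
  | nil => simp
  | @cons a c b h p ih =>
    simp only [Walk.length_cons, Walk.darts_cons, List.filter_cons]
    by_cases hac : ℓ' a = ℓ' c
    · simp only [hac, beq_self_eq_true, if_true, List.length_cons]
      rw [ih, Nat.even_iff, Nat.even_iff]
      omega
    · rw [if_neg (by simpa using hac)]
      have h1 : (ℓ' a = ℓ' b) ↔ ¬ (ℓ' c = ℓ' b) := by
        rcases Bool.eq_false_or_eq_true (ℓ' a) with h' | h' <;>
          rcases Bool.eq_false_or_eq_true (ℓ' b) with h'' | h'' <;>
            rcases Bool.eq_false_or_eq_true (ℓ' c) with h''' | h''' <;> simp_all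
      rw [h1, ih, Nat.even_iff, Nat.even_iff]
      omega

private lemma cycle_two_edges0 {H : SimpleGraph V} {v : V} {c : H.Walk v v} (hc : c.IsCycle) :
    ∃ g₁ ∈ c.edges, ∃ g₂ ∈ c.edges, g₁ ≠ g₂ ∧ v ∈ g₁ ∧ v ∈ g₂ := by
  cases c with
  | nil => exact absurd rfl hc.ne_nil
  | @cons _ x _ h q =>
    obtain ⟨z, r, h', hq⟩ := Walk.exists_cons_eq_concat h q
    have hedges : s(v, x) :: q.edges = r.edges ++ [s(z, v)] := by
      simpa [Walk.edges_concat] using congrArg Walk.edges hq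
    have hlen : 3 ≤ (Walk.cons h q).length := hc.three_le_length
    simp only [Walk.length_cons] at hlen
    have hqlen := q.length_edges
    cases hre : r.edges with
    | nil =>
      rw [hre, List.nil_append] at hedges
      have : q.edges = [] := by simpa using congrArg List.tail hedges
      rw [this] at hqlen
      simp at hqlen
      omega
    | cons re rest =>
      rw [hre, List.cons_append] at hedges
      have h2 : q.edges = rest ++ [s(z, v)] := by
        simpa using congrArg List.tail hedges
      have hlast : s(z, v) ∈ q.edges := by rw [h2]; simp
      have hnodup := hc.edges_nodup
      rw [Walk.edges_cons, List.nodup_cons] at hnodup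
      refine ⟨s(v, x), by simp, s(z, v), by simp [hlast], ?_, by simp, by simp⟩
      intro hcon
      exact hnodup.1 (hcon ▸ hlast)

private lemma cycle_two_edges [DecidableEq V] {H : SimpleGraph V} {v x : V} {c : H.Walk v v}
    (hc : c.IsCycle) (hx : x ∈ c.support) :
    ∃ g₁ ∈ c.edges, ∃ g₂ ∈ c.edges, g₁ ≠ g₂ ∧ x ∈ g₁ ∧ x ∈ g₂ := by
  obtain ⟨g₁, h1, g₂, h2, hne, m1, m2⟩ := cycle_two_edges0 (hc.rotate hx)
  exact ⟨g₁, ((c.rotate_edges _ hx).mem_iff).mp h1, g₂, ((c.rotate_edges _ hx).mem_iff).mp h2,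
    hne, m1, m2⟩

private lemma walk_support_VF {F : Set (Sym2 V)} {a b : V}
    (p : (SimpleGraph.fromEdgeSet F).Walk a b) (ha : a ∈ VF F) :
    ∀ x ∈ p.support, x ∈ VF F := by
  induction p with
  | nil => intro x hx; rw [Walk.mem_support_nil_iff] at hx; exact hx ▸ ha
  | @cons a c b h q ih =>
    have hc : c ∈ VF F :=
      ⟨s(a, c), ((SimpleGraph.fromEdgeSet_adj _).mp h).1, Sym2.mem_mk_right a c⟩
    intro x hx
    rw [Walk.support_cons, List.mem_cons] at hx
    rcases hx with rfl | hx
    · exact ha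
    · exact ih hc x hx

/-- Let `F` be a connected bipartite edge set with a proper 2-labeling `ℓ` of its
endpoints, with `B(G, F) = ∅`, and let `e = s(u, w)` be an edge of `G` adjacent to `F`
with new endpoint `w ∉ V[F]` (and `u ∈ V[F]`).  Then `B(G, F ∪ {e}) = N₋(G, F, e)`:
the edges of `G` outside `F ∪ {e}` incident to `w` whose other endpoint lies in `V[F]`
and carries the same label as the one forced on `w` (the opposite of `ℓ u`). -/
theorem stmt_15 [Fintype V] (G : SimpleGraph V) (F : Set (Sym2 V))
    (hFG : F ⊆ G.edgeSet) (hF : CBES F) (ℓ : V → Bool)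
    (hprop : ∀ a b : V, s(a, b) ∈ F → ℓ a ≠ ℓ b)
    (hB : Bset G F = ∅)
    (u w : V) (he : s(u, w) ∈ G.edgeSet) (hu : u ∈ VF F) (hw : w ∉ VF F) :
    Bset G (F ∪ {s(u, w)}) =
      {f | f ∈ G.edgeSet ∧ f ∉ F ∪ {s(u, w)} ∧
        ∃ y ∈ VF F, f = s(w, y) ∧ ℓ y = !(ℓ u)} := by
  classical
  have huw : u ≠ w := fun h => hw (h ▸ hu)
  have hwF : ∀ g ∈ F, w ∉ g := fun g hg hwg => hw ⟨g, hg, hwg⟩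
  ext f
  constructor
  · rintro ⟨hfG, hfF', v0, c, hcyc, hodd, hfc⟩
    refine ⟨hfG, hfF', ?_⟩
    set ℓ' : V → Bool := fun x => if x = w then !ℓ u else ℓ x with hℓ'
    have hℓ'w : ℓ' w = !ℓ u := by simp [hℓ']
    have hℓ'VF : ∀ x ∈ VF F, ℓ' x = ℓ x := by
      intro x hx
      simp only [hℓ']
      rw [if_neg (fun h : x = w => hw (h ▸ hx))]
    have hproper : ∀ a b : V, s(a, b) ∈ F ∪ {s(u, w)} → ℓ' a ≠ ℓ' b := by
      rintro a b (hab | hab)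
      · have haV : a ∈ VF F := ⟨_, hab, Sym2.mem_mk_left a b⟩
        have hbV : b ∈ VF F := ⟨_, hab, Sym2.mem_mk_right a b⟩
        rw [hℓ'VF a haV, hℓ'VF b hbV]; exact hprop a b hab
      · rw [Set.mem_singleton_iff, Sym2.eq_iff] at hab
        rcases hab with ⟨rfl, rfl⟩ | ⟨rfl, rfl⟩
        · rw [hℓ'VF a hu, hℓ'w]; simp
        · rw [hℓ'VF b hu, hℓ'w]; simp
    have hedgesub : ∀ g ∈ c.edges, g ∈ (F ∪ {s(u, w)}) ∪ {f} := by
      intro g hg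
      have h1 := c.edges_subset_edgeSet hg
      rw [SimpleGraph.edgeSet_fromEdgeSet] at h1
      exact h1.1
    -- there is a "bad" dart, whose edge must be `f`
    have heven := (walk_parity ℓ' c).mp rfl
    have hfil : c.darts.filter (fun d => ℓ' d.toProd.1 == ℓ' d.toProd.2) ≠ [] := by
      intro h0
      rw [h0] at heven
      simp only [List.length_nil, Nat.add_zero] at heven
      exact (Nat.not_even_iff_odd.mpr hodd) heven
    obtain ⟨d, hd⟩ := List.exists_mem_of_ne_nil _ hfil
    rw [List.mem_filter] at hd
    obtain ⟨hdmem, hdbad⟩ := hd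
    have hab : ℓ' d.toProd.1 = ℓ' d.toProd.2 := by simpa using hdbad
    have hdedge : d.edge ∈ c.edges := List.mem_map_of_mem hdmem
    have hdeq : d.edge = s(d.toProd.1, d.toProd.2) := rfl
    have hfe : d.edge = f := by
      rcases hedgesub _ hdedge with hFe | hf
      · rw [hdeq] at hFe
        exact absurd hab (hproper _ _ hFe)
      · exact hf
    by_cases hwf : w ∈ f
    · -- w ∈ f : extract y
      obtain ⟨⟨a, b⟩, hadj⟩ := d
      simp only at hab hdeq
      rw [← hfe, hdeq, Sym2.mem_iff] at hwf
      have hane : a ≠ b := hadj.ne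
      -- y is the endpoint of f other than w
      obtain ⟨y, hyw, hfy, hly'⟩ :
          ∃ y, y ≠ w ∧ f = s(w, y) ∧ ℓ' y = ℓ' w := by
        rcases hwf with rfl | rfl
        · exact ⟨b, fun hh => hane hh.symm, by rw [← hfe, hdeq], hab.symm⟩
        · exact ⟨a, hane, by rw [← hfe, hdeq, Sym2.eq_swap], hab⟩
      have hly : ℓ y = !(ℓ u) := by
        have h2 : ℓ' y = ℓ y := by simp only [hℓ']; rw [if_neg hyw]
        rw [← h2, hly', hℓ'w]
      have hyu : y ≠ u := by
        intro h
        rw [h] at hly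
        simp at hly
      -- y ∈ VF F via the second cycle edge at y
      have hysup : y ∈ c.support := by
        apply Walk.snd_mem_support_of_mem_edges c
        rw [← hfy]; exact hfc
      obtain ⟨g₁, hg1, g₂, hg2, hgne, m1, m2⟩ := cycle_two_edges hcyc hysup
      have key : ∀ g ∈ c.edges, y ∈ g → g = f ∨ y ∈ VF F := by
        intro g hg hyg
        rcases hedgesub g hg with (hgF | hge) | hgf
        · exact Or.inr ⟨g, hgF, hyg⟩
        · rw [Set.mem_singleton_iff] at hge
          rw [hge, Sym2.mem_iff] at hyg
          rcases hyg with h1 | h1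
          · exact absurd h1 hyu
          · exact absurd h1 hyw
        · exact Or.inl hgf
      have hyVF : y ∈ VF F := by
        rcases key g₁ hg1 m1 with h1 | h1
        · rcases key g₂ hg2 m2 with h2 | h2
          · exact absurd (h1.trans h2.symm) hgne
          · exact h2
        · exact h1
      exact ⟨y, hyVF, hfy, hly⟩
    · -- w ∉ f : impossible
      exfalso
      by_cases heC : s(u, w) ∈ c.edges
      · have hwsup : w ∈ c.support := Walk.snd_mem_support_of_mem_edges c heC
        obtain ⟨g₁, hg1, g₂, hg2, hgne, m1, m2⟩ := cycle_two_edges hcyc hwsup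
        have key : ∀ g ∈ c.edges, w ∈ g → g = s(u, w) := by
          intro g hg hwg
          rcases hedgesub g hg with (hgF | hge) | hgf
          · exact absurd hwg (hwF g hgF)
          · exact hge
          · rw [Set.mem_singleton_iff] at hgf
            exact absurd (hgf ▸ hwg) hwf
        exact hgne ((key g₁ hg1 m1).trans (key g₂ hg2 m2).symm)
      · have hsub : ∀ g ∈ c.edges, g ∈ (SimpleGraph.fromEdgeSet (F ∪ {f})).edgeSet := by
          intro g hg
          have h1 := c.edges_subset_edgeSet hg
          rw [SimpleGraph.edgeSet_fromEdgeSet] at h1 ⊢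
          refine ⟨?_, h1.2⟩
          rcases h1.1 with (hgF | hge) | hgf
          · exact Or.inl hgF
          · rw [Set.mem_singleton_iff] at hge
            exact absurd (hge ▸ hg) heC
          · exact Or.inr hgf
        have hmem : f ∈ Bset G F := by
          refine ⟨hfG, fun hfF => hfF' (Or.inl hfF), v0, c.transfer _ hsub,
            hcyc.transfer hsub, ?_, ?_⟩
          · rwa [Walk.length_transfer]
          · rw [Walk.edges_transfer]; exact hfc
        rw [hB] at hmem
        exact hmem
  · rintro ⟨hfG, hfF', y, hyVF, rfl, hly⟩
    refine ⟨hfG, hfF', ?_⟩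
    have hfnd : ¬ (s(w, y) : Sym2 V).IsDiag := G.not_isDiag_of_mem_edgeSet hfG
    have hwy : w ≠ y := by simpa [Sym2.mk_isDiag_iff] using hfnd
    have hyu : y ≠ u := by
      intro h
      rw [h] at hly
      simp at hly
    have hsupp : ∀ x, x ∈ VF F → x ∈ (SimpleGraph.fromEdgeSet F).support := by
      intro x hx
      obtain ⟨g, hgF, hxg⟩ := hx
      obtain ⟨z, rfl⟩ := Sym2.mem_iff_exists.mp hxg
      have hnd := G.not_isDiag_of_mem_edgeSet (hFG hgF)
      rw [Sym2.mk_isDiag_iff] at hnd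
      exact (SimpleGraph.mem_support _).mpr ⟨z, (SimpleGraph.fromEdgeSet_adj _).mpr ⟨hgF, hnd⟩⟩
    obtain ⟨p₀⟩ := hF.1.preconnected ⟨u, hsupp u hu⟩ ⟨y, hsupp y hyVF⟩
    let φ : ((SimpleGraph.fromEdgeSet F).induce (SimpleGraph.fromEdgeSet F).support) →g
        (SimpleGraph.fromEdgeSet F) := ⟨Subtype.val, fun h => h⟩
    let p : (SimpleGraph.fromEdgeSet F).Walk u y := (p₀.map φ).bypass
    have hp : p.IsPath := Walk.bypass_isPath _
    have hpVF : ∀ x ∈ p.support, x ∈ VF F := walk_support_VF p hu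
    have hwsup : w ∉ p.support := fun h => hw (hpVF w h)
    have hcount : p.darts.filter (fun d => ℓ d.toProd.1 == ℓ d.toProd.2) = [] := by
      rw [List.filter_eq_nil_iff]
      intro d hd
      simp only [beq_iff_eq]
      exact hprop _ _ (((SimpleGraph.fromEdgeSet_adj _).mp d.adj).1)
    have hlodd : Odd p.length := by
      have hpar := walk_parity ℓ p
      rw [hcount] at hpar
      simp only [List.length_nil, Nat.add_zero] at hpar
      have hne : ℓ u ≠ ℓ y := by rw [hly]; simp
      rw [← Nat.not_even_iff_odd]
      exact fun hev => hne (hpar.mpr hev)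
    have hsubE : ∀ g ∈ p.edges,
        g ∈ (SimpleGraph.fromEdgeSet ((F ∪ {s(u, w)}) ∪ {s(w, y)})).edgeSet := by
      intro g hg
      have h1 := p.edges_subset_edgeSet hg
      rw [SimpleGraph.edgeSet_fromEdgeSet] at h1 ⊢
      exact ⟨Or.inl (Or.inl h1.1), h1.2⟩
    set H := SimpleGraph.fromEdgeSet ((F ∪ {s(u, w)}) ∪ {s(w, y)}) with hH
    let q := p.transfer H hsubE
    have hqedges : q.edges = p.edges := Walk.edges_transfer p hsubE
    have hqsupp : q.support = p.support := Walk.support_transfer p hsubE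
    have hadj_yw : H.Adj y w := (SimpleGraph.fromEdgeSet_adj _).mpr
      ⟨Or.inr (by rw [Set.mem_singleton_iff, Sym2.eq_swap]), fun h => hwy h.symm⟩
    have hadj_wu : H.Adj w u := (SimpleGraph.fromEdgeSet_adj _).mpr
      ⟨Or.inl (Or.inr (by rw [Set.mem_singleton_iff, Sym2.eq_swap])), fun h => huw h.symm⟩
    let r := q.concat hadj_yw
    have hredges : r.edges = q.edges ++ [s(y, w)] := by
      simp [r, Walk.edges_concat]
    have hrpath : r.IsPath := by
      rw [Walk.isPath_def, Walk.support_concat, List.nodup_append]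
      refine ⟨by rw [hqsupp]; exact hp.support_nodup, List.nodup_singleton _, ?_⟩
      intro x hx b hx2
      rw [List.mem_singleton] at hx2
      rw [hqsupp] at hx
      subst hx2
      rintro rfl
      exact hwsup hx
    refine ⟨w, Walk.cons hadj_wu r, ?_, ?_, ?_⟩
    · rw [Walk.cons_isCycle_iff]
      refine ⟨hrpath, ?_⟩
      rw [hredges, List.mem_append]
      rintro (hmem | hmem)
      · rw [hqedges] at hmem
        have h1 := p.edges_subset_edgeSet hmem
        rw [SimpleGraph.edgeSet_fromEdgeSet] at h1
        exact hwF _ h1.1 (Sym2.mem_mk_left w u)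
      · rw [List.mem_singleton, Sym2.eq_iff] at hmem
        rcases hmem with ⟨h1, h2⟩ | ⟨h1, h2⟩
        · exact hwy h1
        · exact hyu h2.symm
    · have hlen : (Walk.cons hadj_wu r).length = p.length + 2 := by
        show (Walk.cons hadj_wu ((p.transfer H hsubE).concat hadj_yw)).length = p.length + 2
        rw [Walk.length_cons, Walk.length_concat, Walk.length_transfer]
      rw [hlen]
      rcases hlodd with ⟨k, hk⟩
      exact ⟨k + 1, by omega⟩
    · rw [Walk.edges_cons, hredges]
      simp only [List.mem_cons, List.mem_append, List.mem_singleton]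
      exact Or.inr (Or.inr (Or.inl Sym2.eq_swap))
end

section
/- If F is a connected bipartite edge set of G and B(G, F) is the set of edges f ∈ E \ F such that F ∪ {f} contains an odd cycle, then the connected bipartite edge sets of G containing F coincide with the connected bipartite edge sets of G \ B(G, F) containing F: 𝒮(G, F) = 𝒮(G \ B(G, F), F). -/
attribute [-instance] Sym2.instPartialOrder


variable {V : Type*}

/-- `NE(G, F)`: edges of `G` outside `F` adjacent to (sharing an endpoint with) some edge
of `F`. -/
def NEset (G : SimpleGraph V) (F : Set (Sym2 V)) : Set (Sym2 V) :=
  {f | f ∈ G.edgeSet ∧ f ∉ F ∧ ∃ e ∈ F, ∃ v : V, v ∈ e ∧ v ∈ f}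

/-- The edge set of `G(F, ≥ e)`: `G` minus all edges of `NE(G, F)` smaller than `e`. -/
def EGge [LinearOrder (Sym2 V)] (G : SimpleGraph V) (F : Set (Sym2 V)) (e : Sym2 V) :
    Set (Sym2 V) := G.edgeSet \ {f | f ∈ NEset G F ∧ f < e}

/-- `𝒮(H, F₀)` for the graph `H` with edge set `A`: connected bipartite edge sets
contained in `A` and containing `F₀`. -/
def ESol (A F₀ : Set (Sym2 V)) : Set (Set (Sym2 V)) :=
  {F | F ⊆ A ∧ F₀ ⊆ F ∧ CBES F}

lemma walk_parity_s18 {H : SimpleGraph V} {L : Set V}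
    (hx : ∀ u v, H.Adj u v → (u ∈ L ∧ v ∉ L) ∨ (u ∉ L ∧ v ∈ L)) :
    ∀ {u v : V} (w : H.Walk u v), ((u ∈ L ↔ v ∈ L) ↔ Even w.length) := by
  intro u v w
  induction w with
  | nil => simp
  | cons h p ih =>
    have := hx _ _ h
    simp only [SimpleGraph.Walk.length_cons, Nat.even_add_one]
    tauto

/-- The connected bipartite edge sets of `G` containing `F` coincide with the connected
bipartite edge sets of `G \ B(G, F)` containing `F`. -/
theorem stmt_18 [Fintype V] (G : SimpleGraph V) (F : Set (Sym2 V))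
    (hFG : F ⊆ G.edgeSet) (hF : CBES F) :
    ESol G.edgeSet F = ESol (G.edgeSet \ Bset G F) F := by
  ext F'
  simp only [ESol, Set.mem_setOf_eq]
  constructor
  · rintro ⟨hsub, hF0, hC⟩
    refine ⟨fun f hf => ⟨hsub hf, ?_⟩, hF0, hC⟩
    rintro ⟨-, hfF, v, w, hcyc, hodd, -⟩
    obtain ⟨-, L, R, hcov, hdisj, hadj⟩ := hC
    have hle : SimpleGraph.fromEdgeSet (F ∪ {f}) ≤ SimpleGraph.fromEdgeSet F' := by
      apply SimpleGraph.fromEdgeSet_mono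
      intro e he
      rcases he with he | he
      · exact hF0 he
      · rcases he with rfl; exact hf
    have hx : ∀ u x, (SimpleGraph.fromEdgeSet F').Adj u x →
        (u ∈ {y : V | ∃ h : y ∈ (SimpleGraph.fromEdgeSet F').support, (⟨y, h⟩ : _) ∈ L} ∧
          x ∉ {y : V | ∃ h : y ∈ (SimpleGraph.fromEdgeSet F').support, (⟨y, h⟩ : _) ∈ L}) ∨
        (u ∉ {y : V | ∃ h : y ∈ (SimpleGraph.fromEdgeSet F').support, (⟨y, h⟩ : _) ∈ L} ∧
          x ∈ {y : V | ∃ h : y ∈ (SimpleGraph.fromEdgeSet F').support, (⟨y, h⟩ : _) ∈ L}) := by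
      intro u x huv
      have hu : u ∈ (SimpleGraph.fromEdgeSet F').support := ⟨x, huv⟩
      have hv : x ∈ (SimpleGraph.fromEdgeSet F').support := ⟨u, huv.symm⟩
      have hind : ((SimpleGraph.fromEdgeSet F').induce
          (SimpleGraph.fromEdgeSet F').support).Adj ⟨u, hu⟩ ⟨x, hv⟩ := huv
      rcases hadj _ _ hind with ⟨h1, h2⟩ | ⟨h1, h2⟩
      · left
        refine ⟨⟨hu, h1⟩, ?_⟩
        rintro ⟨h', hmem⟩
        exact hdisj ⟨x, hv⟩ ⟨hmem, h2⟩
      · right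
        refine ⟨?_, ⟨hv, h2⟩⟩
        rintro ⟨h', hmem⟩
        exact hdisj ⟨u, hu⟩ ⟨hmem, h1⟩
    have heven : Even (w.mapLe hle).length := (walk_parity_s18 hx (w.mapLe hle)).mp Iff.rfl
    have hlen : (w.mapLe hle).length = w.length := by
      simp [SimpleGraph.Walk.mapLe]
    rw [hlen] at heven
    exact (Nat.not_even_iff_odd.mpr hodd) heven
  · rintro ⟨hsub, hF0, hC⟩
    exact ⟨fun f hf => (hsub hf).1, hF0, hC⟩
end
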